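/- Let M be a matroid with ground set [m] and let i ∈ [m] be a non-loop of M. Then { u ∈ ℤ^m : Σ_{j=1}^m u_j = 1 and for every subset S ⊆ [m], Σ_{j∈S} u_j ≤ 1 if i ∈ cl_M(S) and Σ_{j∈S} u_j ≤ 0 if i ∉ cl_M(S) } = { e_j : j is a non-loop of M with cl_M({j}) = cl_M({i}) }, i.e. it consists exactly of the standard basis vectors e_j for the elements j parallel to i (including j = i). -/
import Mathlib


open scoped Classical

/-- The standard basis vector `e_j ∈ ℤ^m`. -/
def stdVec (m : ℕ) (j : Fin m) : Fin m → ℤ := fun k => if k = j then 1 else 0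

/-- For a non-loop `i` of a matroid `M` on `[m]`, the lattice points of the
parliament polytope `P_i` on the hyperplane `∑_j u_j = 1` are exactly the standard
basis vectors `e_j` for the elements `j` parallel to `i` (non-loops with
`cl_M({j}) = cl_M({i})`), including `j = i`. -/
theorem parliament_polytope_nonloop (m : ℕ) (M : Matroid (Fin m)) (hE : M.E = Set.univ)
    (i : Fin m) (hi : i ∉ M.closure ∅) :
    {u : Fin m → ℤ | (∑ j, u j) = 1 ∧ ∀ S : Finset (Fin m),
        if i ∈ M.closure (S : Set (Fin m)) then (∑ j ∈ S, u j) ≤ 1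
        else (∑ j ∈ S, u j) ≤ 0} =
      {v | ∃ j : Fin m, j ∉ M.closure ∅ ∧
        M.closure {j} = M.closure {i} ∧ v = stdVec m j} := by
  have hiE : i ∈ M.E := by rw [hE]; trivial
  have hii : i ∈ M.closure {i} := M.mem_closure_self i hiE
  -- key characterization: i ∈ cl {j} iff j is parallel to i
  have hkey : ∀ j : Fin m, i ∈ M.closure {j} ↔
      (j ∉ M.closure ∅ ∧ M.closure {j} = M.closure {i}) := by
    intro j
    constructor
    · intro hij
      have hjl : j ∉ M.closure ∅ := by
        intro hj
        exact hi (M.closure_subset_closure_of_subset_closure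
          (Set.singleton_subset_iff.mpr hj) hij)
      refine ⟨hjl, ?_⟩
      have hex : j ∈ M.closure (insert i ∅) \ M.closure ∅ := by
        have : i ∈ M.closure (insert j ∅) \ M.closure ∅ := by
          simpa using ⟨hij, hi⟩
        exact Matroid.closure_exchange this
      have hji : j ∈ M.closure {i} := by simpa using hex.1
      apply le_antisymm
      · exact M.closure_subset_closure_of_subset_closure
          (Set.singleton_subset_iff.mpr hji)
      · exact M.closure_subset_closure_of_subset_closure
          (Set.singleton_subset_iff.mpr hij)
    · rintro ⟨-, hcl⟩
      rw [hcl]; exact hii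
  ext u
  simp only [Set.mem_setOf_eq]
  constructor
  · rintro ⟨hsum, hcon⟩
    set P : Finset (Fin m) :=
      Finset.univ.filter (fun j => j ∉ M.closure ∅ ∧ M.closure {j} = M.closure {i}) with hP
    have hmemP : ∀ j, j ∈ P ↔ (j ∉ M.closure ∅ ∧ M.closure {j} = M.closure {i}) := by
      intro j; simp [hP]
    have hiP : i ∈ P := (hmemP i).2 ⟨hi, rfl⟩
    -- non-parallel elements have u j ≤ 0
    have hnpos : ∀ j ∉ P, u j ≤ 0 := by
      intro j hj
      have h1 := hcon {j}
      have h2 : i ∉ M.closure ({j} : Set (Fin m)) := fun h => hj ((hmemP j).2 ((hkey j).1 h))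
      rw [if_neg (by simpa using h2)] at h1
      simpa using h1
    -- i ∈ cl P
    have hiclP : i ∈ M.closure (P : Set (Fin m)) := by
      have : M.closure {i} ⊆ M.closure (P : Set (Fin m)) :=
        M.closure_subset_closure (Set.singleton_subset_iff.mpr (by exact_mod_cast hiP))
      exact this hii
    have hsplit : (∑ j ∈ P, u j) + (∑ j ∈ Pᶜ, u j) = 1 := by
      rw [Finset.sum_add_sum_compl]; exact hsum
    have hPle : (∑ j ∈ P, u j) ≤ 1 := by
      have := hcon P; rwa [if_pos hiclP] at this
    have hPcle : (∑ j ∈ Pᶜ, u j) ≤ 0 :=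
      Finset.sum_nonpos fun j hj => hnpos j (Finset.mem_compl.mp hj)
    have hPsum : (∑ j ∈ P, u j) = 1 := le_antisymm hPle (by omega)
    have hPcsum : (∑ j ∈ Pᶜ, u j) = 0 := by omega
    have hzero : ∀ j ∉ P, u j = 0 := by
      intro j hj
      have := (Finset.sum_eq_zero_iff_of_nonpos
        (fun k hk => hnpos k (Finset.mem_compl.mp hk))).1 hPcsum j (Finset.mem_compl.mpr hj)
      exact this
    -- all coordinates are nonnegative
    have hnonneg : ∀ j, 0 ≤ u j := by
      intro j
      by_cases hjP : j ∈ P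
      · by_cases hk : ∃ k ∈ P, k ≠ j
        · obtain ⟨k, hkP, hkj⟩ := hk
          have hW := hcon (Finset.univ.erase j)
          have hik : i ∈ M.closure ((Finset.univ.erase j : Finset (Fin m)) : Set (Fin m)) := by
            have hkin : (k : Fin m) ∈ ((Finset.univ.erase j : Finset (Fin m)) : Set (Fin m)) := by
              simp [hkj]
            have : M.closure {k} ⊆ M.closure _ :=
              M.closure_subset_closure (Set.singleton_subset_iff.mpr hkin)
            have hik' : i ∈ M.closure {k} := (hkey k).2 ((hmemP k).1 hkP)
            exact this hik'
          rw [if_pos hik] at hW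
          have herase : (∑ l ∈ Finset.univ.erase j, u l) = (∑ l, u l) - u j := by
            rw [Finset.sum_erase_eq_sub (Finset.mem_univ j)]
          rw [herase, hsum] at hW
          omega
        · push_neg at hk
          have hPj : P = {j} := by
            apply Finset.eq_singleton_iff_unique_mem.mpr
            exact ⟨hjP, fun k hkP => hk k hkP⟩
          have : u j = 1 := by rw [hPj, Finset.sum_singleton] at hPsum; exact hPsum
          omega
      · rw [hzero j hjP]
    -- find the unique coordinate equal to 1
    have hex : ∃ j0, 0 < u j0 := by
      by_contra h
      push_neg at h
      have : (∑ j, u j) ≤ 0 := Finset.sum_nonpos fun j _ => h j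
      omega
    obtain ⟨j0, hj0⟩ := hex
    have hj0P : j0 ∈ P := by
      by_contra h
      rw [hzero j0 h] at hj0; omega
    refine ⟨j0, ((hmemP j0).1 hj0P).1, ((hmemP j0).1 hj0P).2, ?_⟩
    have hrest : (∑ j ∈ Finset.univ.erase j0, u j) = 1 - u j0 := by
      rw [Finset.sum_erase_eq_sub (Finset.mem_univ j0), hsum]
    have hrestnn : 0 ≤ (∑ j ∈ Finset.univ.erase j0, u j) :=
      Finset.sum_nonneg fun j _ => hnonneg j
    have hu1 : u j0 = 1 := by omega
    have hrest0 : (∑ j ∈ Finset.univ.erase j0, u j) = 0 := by omega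
    have hallz : ∀ j ∈ Finset.univ.erase j0, u j = 0 :=
      (Finset.sum_eq_zero_iff_of_nonneg (fun j _ => hnonneg j)).1 hrest0
    funext k
    by_cases hk : k = j0
    · subst hk; simp [stdVec, hu1]
    · have : u k = 0 := hallz k (by simp [hk])
      simp [stdVec, hk, this]
  · rintro ⟨j, hjl, hjcl, rfl⟩
    have hij : i ∈ M.closure {j} := (hkey j).2 ⟨hjl, hjcl⟩
    constructor
    · simp [stdVec]
    · intro S
      have hsumS : (∑ k ∈ S, stdVec m j k) = if j ∈ S then 1 else 0 := by
        simp [stdVec, Finset.sum_ite_eq' S j (fun _ => (1 : ℤ))]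
      by_cases hiS : i ∈ M.closure (S : Set (Fin m))
      · rw [if_pos hiS, hsumS]
        split <;> omega
      · rw [if_neg hiS, hsumS]
        have hjS : j ∉ S := by
          intro hjS
          apply hiS
          have : M.closure {j} ⊆ M.closure (S : Set (Fin m)) :=
            M.closure_subset_closure (Set.singleton_subset_iff.mpr (by exact_mod_cast hjS))
          exact this hij
        rw [if_neg hjS]
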